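/- In any model A of S_k with k ≥ 1, the iterated singleton map is injective and produces new elements: if a ∈ A is such that a ∉ tcl(a_i) for all other entries a_i of a tuple a, then the iterated singletons {a}^t (with {a}^0 = a and {a}^{t+1} = the unique element whose extension is {{a}^t}) satisfy {a}^1 ∉ tcl(ā), and {a}^s ∈ tcl({a}^t) iff s ≤ t. -/
import Mathlib


/-- Levels of the transitive closure of a tuple. -/
def tcl {A : Type*} (r : A → A → Prop) {l : ℕ} (a : Fin l → A) : ℕ → Set A
  | 0 => Set.range a
  | n + 1 => tcl r a n ∪ {v | ∃ u ∈ tcl r a n, r v u}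

/-- `r` makes `A` a model of the theory `S_k`. -/
def IsSkModel {A : Type*} (r : A → A → Prop) (k : ℕ) : Prop :=
  (∀ x y : A, (∀ t, r t x ↔ r t y) → x = y) ∧
  (∀ x : A, {t | r t x}.Finite ∧ {t | r t x}.ncard ≤ k) ∧
  (∀ s : Set A, s.Finite → s.ncard ≤ k → ∃ y : A, ∀ t, r t y ↔ t ∈ s) ∧
  (∀ x : A, ¬ Relation.TransGen r x x)

lemma mem_iUnion_tcl_iff {A : Type*} (r : A → A → Prop) {l : ℕ} (a : Fin l → A) (x : A) :
    x ∈ ⋃ m, tcl r a m ↔ ∃ j, Relation.ReflTransGen r x (a j) := by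
  simp only [Set.mem_iUnion]
  constructor
  · have key : ∀ (m : ℕ) (y : A), y ∈ tcl r a m → ∃ j, Relation.ReflTransGen r y (a j) := by
      intro m
      induction m with
      | zero => rintro y ⟨j, hj⟩; exact ⟨j, hj ▸ Relation.ReflTransGen.refl⟩
      | succ n ih =>
        rintro y (h | ⟨u, hu, hru⟩)
        · exact ih y h
        · obtain ⟨j, hj⟩ := ih u hu
          exact ⟨j, Relation.ReflTransGen.head hru hj⟩
    rintro ⟨m, hm⟩
    exact key m x hm
  · rintro ⟨j, hj⟩
    induction hj using Relation.ReflTransGen.head_induction_on with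
    | refl => exact ⟨0, ⟨j, rfl⟩⟩
    | head hbc _ ih =>
      obtain ⟨m, hm⟩ := ih
      exact ⟨m + 1, Or.inr ⟨_, hm, hbc⟩⟩

/-- In a model of `S_k` (`k ≥ 1`) with singleton operation `sg` (`sg x` is the unique
element with extension `{x}`), if `a = a_{i₀}` is an entry of the tuple `ā` with
`a ∉ tcl(a_j)` for all other entries `a_j`, then the iterated singleton map
`t ↦ {a}^t` is injective, `{a}^1 ∉ tcl(ā)`, and `{a}^s ∈ tcl({a}^t) ↔ s ≤ t`. -/
theorem iterated_singletons {A : Type*} (mem : A → A → Prop) (k : ℕ) (hk : 1 ≤ k)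
    (hA : IsSkModel mem k) (sg : A → A) (hsg : ∀ x t, mem t (sg x) ↔ t = x)
    {l : ℕ} (a : Fin l → A) (i₀ : Fin l)
    (hmax : ∀ j : Fin l, a j ≠ a i₀ → a i₀ ∉ ⋃ m, tcl mem (fun _ : Fin 1 => a j) m) :
    Function.Injective (fun t : ℕ => sg^[t] (a i₀)) ∧
    sg^[1] (a i₀) ∉ ⋃ m, tcl mem a m ∧
    (∀ s t : ℕ,
      sg^[s] (a i₀) ∈ (⋃ m, tcl mem (fun _ : Fin 1 => sg^[t] (a i₀)) m) ↔ s ≤ t) := by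
  obtain ⟨_, _, _, acyc⟩ := hA
  set x := a i₀ with hx
  have hmem : ∀ y : A, mem y (sg y) := fun y => (hsg y y).mpr rfl
  have hstep : ∀ t : ℕ, mem (sg^[t] x) (sg^[t+1] x) := by
    intro t
    rw [Function.iterate_succ_apply']
    exact hmem _
  have hle : ∀ s t : ℕ, s ≤ t → Relation.ReflTransGen mem (sg^[s] x) (sg^[t] x) := by
    intro s t hst
    induction t, hst using Nat.le_induction with
    | base => exact Relation.ReflTransGen.refl
    | succ n hn ih => exact ih.tail (hstep n)
  have hlt : ∀ s t : ℕ, s < t → Relation.TransGen mem (sg^[s] x) (sg^[t] x) := by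
    intro s t hst
    exact Relation.TransGen.head' (hstep s) (hle _ _ hst)
  have hinj : Function.Injective (fun t : ℕ => sg^[t] x) := by
    intro s t h
    simp only at h
    by_contra hne
    rcases Nat.lt_or_ge s t with h1 | h1
    · exact acyc _ (h ▸ hlt s t h1)
    · exact acyc _ (h ▸ hlt t s (lt_of_le_of_ne h1 (Ne.symm hne)))
  refine ⟨hinj, ?_, ?_⟩
  · intro hin
    rw [Function.iterate_one, mem_iUnion_tcl_iff] at hin
    obtain ⟨j, hj⟩ := hin
    have htg : Relation.TransGen mem x (a j) :=
      Relation.TransGen.head' (hmem x) hj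
    by_cases hja : a j = a i₀
    · exact acyc _ (hja ▸ htg)
    · exact hmax j hja ((mem_iUnion_tcl_iff mem (fun _ : Fin 1 => a j) (a i₀)).mpr
        ⟨0, htg.to_reflTransGen⟩)
  · intro s t
    rw [mem_iUnion_tcl_iff]
    constructor
    · rintro ⟨j, hj⟩
      by_contra hst
      push_neg at hst
      rcases (Relation.reflTransGen_iff_eq_or_transGen.mp hj) with heq | htg
      · exact absurd (hinj heq.symm) (Nat.ne_of_gt hst)
      · exact acyc _ ((hlt t s hst).trans htg)
    · intro hst
      exact ⟨0, hle s t hst⟩
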